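/- arXiv:2503.00970 — 2 statements merged into one kernel-verified Lean document; each statement's English description precedes it below -/
import Mathlib

section
/- Let C ⊆ ℝⁿ be a pointed n-dimensional closed convex cone, ω ⊆ Ω = S^{n-1} ∩ int C° a nonempty compact set, μ a nonzero finite Borel measure on ω, and p < 0. Let K be a C-pseudo-cone and set d = dist(0,K) > 0. Then γⁿ(K) / ∫_ω (−h_K(u))^p dμ(u) ≤ (2n√n / (√(2π) d)) · e^{-d²/(2n)} · d^{-p} / μ(ω). -/
open MeasureTheory Metric Set Filter
open scoped RealInnerProductSpace Pointwise Topology ENNReal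

noncomputable section

/-- `ℝⁿ` as Euclidean space. -/
abbrev En (n : ℕ) := EuclideanSpace ℝ (Fin n)

/-- The standard Gaussian measure of a set `A ⊆ ℝⁿ`:
`γⁿ(A) = (2π)^{-n/2} ∫_A e^{-‖x‖²/2} dx`. -/
def gaussianMeasure (n : ℕ) (A : Set (En n)) : ℝ :=
  (2 * Real.pi) ^ (-(n : ℝ) / 2) * ∫ x in A, Real.exp (-‖x‖ ^ 2 / 2)

/-- A pointed (no lines), `n`-dimensional (nonempty interior), closed convex cone. -/
def IsPointedCone {n : ℕ} (C : Set (En n)) : Prop :=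
  IsClosed C ∧ Convex ℝ C ∧ (∀ x ∈ C, ∀ c : ℝ, 0 ≤ c → c • x ∈ C) ∧
    (interior C).Nonempty ∧ ∀ x ∈ C, -x ∈ C → x = 0

/-- The polar cone `C° = {x : ⟨x,y⟩ ≤ 0 ∀ y ∈ C}`. -/
def polarCone {n : ℕ} (C : Set (En n)) : Set (En n) := {x | ∀ y ∈ C, ⟪x, y⟫ ≤ 0}

/-- `Ω = S^{n-1} ∩ int C°`. -/
def OmegaSet {n : ℕ} (C : Set (En n)) : Set (En n) :=
  sphere (0 : En n) 1 ∩ interior (polarCone C)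

/-- A pseudo-cone: nonempty closed convex set not containing the origin with `λK ⊆ K` for `λ ≥ 1`. -/
def IsPseudoCone {n : ℕ} (K : Set (En n)) : Prop :=
  K.Nonempty ∧ IsClosed K ∧ Convex ℝ K ∧ (0 : En n) ∉ K ∧
    ∀ c : ℝ, 1 ≤ c → c • K ⊆ K

/-- The recession cone `rec K = {z : K + z ⊆ K}`. -/
def recessionCone {n : ℕ} (K : Set (En n)) : Set (En n) := {z | ∀ x ∈ K, x + z ∈ K}

/-- A `C`-pseudo-cone: a pseudo-cone whose recession cone is `C`. -/
def IsCPseudoCone {n : ℕ} (C K : Set (En n)) : Prop :=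
  IsPseudoCone K ∧ recessionCone K = C

/-- The support function `h_K(u) = sup {⟨x,u⟫ : x ∈ K}`. -/
def suppFn {n : ℕ} (K : Set (En n)) (u : En n) : ℝ := sSup ((fun x => ⟪x, u⟫) '' K)

/-- The Wulff shape `[f] = C ∩ ⋂_{u ∈ ω} {y : ⟨y,u⟩ ≤ -f(u)}`. -/
def wulffShape {n : ℕ} (C ω : Set (En n)) (f : En n → ℝ) : Set (En n) :=
  C ∩ ⋂ u ∈ ω, {y | ⟪y, u⟫ ≤ -f u}

/-- `K ∈ 𝒦(C,ω)`: `K` is a `C`-pseudo-cone that is `C`-determined by `ω`. -/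
def InKClass {n : ℕ} (C ω K : Set (En n)) : Prop :=
  IsCPseudoCone C K ∧ K = C ∩ ⋂ u ∈ ω, {y | ⟪y, u⟫ ≤ suppFn K u}

end

/-!
Every point of `K` has norm at least `d`, so one of its `n` coordinates has absolute value at
least `a = d / √n`. A union bound over the coordinate slabs `{|x i| ≥ a}`, Fubini, and the
Mills-ratio bound `∫_a^∞ e^{-t²/2} dt ≤ e^{-a²/2} / a` give
`γⁿ(K) ≤ 2n√n / (√(2π) d) · e^{-d²/(2n)}`.
For `u ∈ ω ⊆ int C°` the support value `h_K(u)` lies in `[-d, 0)`, so `(-h_K(u))^p ≥ d^p`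
because `p < 0`, and the integral is at least `d^p μ(ω)`.
-/

open Real

lemma integrable_exp_neg_sq_div_two : Integrable fun t : ℝ => exp (-t ^ 2 / 2) := by
  convert integrable_exp_neg_mul_sq (b := 1 / 2) (by norm_num) using 2 with t
  ring_nf

lemma integrable_mul_exp_neg_sq_div_two : Integrable fun t : ℝ => t * exp (-t ^ 2 / 2) := by
  convert integrable_mul_exp_neg_mul_sq (b := 1 / 2) (by norm_num) using 2 with t
  ring_nf

lemma integral_exp_neg_sq_div_two : ∫ t : ℝ, exp (-t ^ 2 / 2) = √(2 * π) := by
  convert integral_gaussian (1 / 2) using 3 with t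
  · ring_nf
  · field_simp

lemma integral_Ioi_mul_exp_neg_sq_div_two (a : ℝ) :
    ∫ t in Ioi a, t * exp (-t ^ 2 / 2) = exp (-a ^ 2 / 2) := by
  have hderiv (t : ℝ) :
      HasDerivAt (fun t : ℝ => -exp (-t ^ 2 / 2)) (t * exp (-t ^ 2 / 2)) t := by
    have h : HasDerivAt (fun t : ℝ => -t ^ 2 / 2) (-t) t := by
      simpa using ((hasDerivAt_pow 2 t).neg.div_const 2).congr_deriv (by ring)
    simpa only [neg_mul, neg_neg, mul_comm] using h.exp.fun_neg
  have hlim : Tendsto (fun t : ℝ => -exp (-t ^ 2 / 2)) atTop (𝓝 (-0)) := by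
    refine (tendsto_exp_atBot.comp ?_).neg
    simpa only [Function.comp_def, neg_div] using
      tendsto_neg_atTop_atBot.comp ((tendsto_pow_atTop two_ne_zero).atTop_div_const two_pos)
  rw [integral_Ioi_of_hasDerivAt_of_tendsto' (fun t _ => hderiv t)
    integrable_mul_exp_neg_sq_div_two.integrableOn hlim]
  ring

lemma integral_Ioi_exp_neg_sq_div_two_le {a : ℝ} (ha : 0 < a) :
    ∫ t in Ioi a, exp (-t ^ 2 / 2) ≤ exp (-a ^ 2 / 2) / a :=
  calc ∫ t in Ioi a, exp (-t ^ 2 / 2)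
      ≤ ∫ t in Ioi a, t * exp (-t ^ 2 / 2) / a := by
        refine setIntegral_mono_on integrable_exp_neg_sq_div_two.integrableOn
          (integrable_mul_exp_neg_sq_div_two.div_const a).integrableOn
          measurableSet_Ioi fun t ht => ?_
        rw [le_div_iff₀ ha, mul_comm]
        exact mul_le_mul_of_nonneg_right (le_of_lt ht) (exp_pos _).le
    _ = exp (-a ^ 2 / 2) / a := by
        rw [integral_div, integral_Ioi_mul_exp_neg_sq_div_two]

lemma setIntegral_abs_ge_eq_two_mul_setIntegral_Ioi {f : ℝ → ℝ} (hf : f.Even) {a : ℝ}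
    (ha : 0 < a) : ∫ t in {t : ℝ | a ≤ |t|}, f t = 2 * ∫ t in Ioi a, f t := by
  have hS : MeasurableSet {t : ℝ | a ≤ |t|} := measurableSet_le measurable_const measurable_abs
  have hf_abs (t : ℝ) : f |t| = f t := by
    rcases abs_choice t with h | h <;> rw [h]
    exact hf t
  calc ∫ t in {t : ℝ | a ≤ |t|}, f t
      = ∫ t, (Ici a).indicator f |t| := by
        rw [← integral_indicator hS]
        congr 1 with t
        simp only [indicator, mem_ofPred_eq, mem_Ici, hf_abs]
    _ = 2 * ∫ t in Ioi a, f t := by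
        rw [integral_comp_abs, setIntegral_indicator measurableSet_Ici,
          inter_eq_right.2 (Ici_subset_Ioi.2 ha), integral_Ici_eq_integral_Ioi]

section EuclideanGaussian

variable {ι : Type*} [Fintype ι]

lemma exp_neg_norm_sq_div_two_eq_prod (x : EuclideanSpace ℝ ι) :
    exp (-‖x‖ ^ 2 / 2) = ∏ j, exp (-x j ^ 2 / 2) := by
  rw [EuclideanSpace.real_norm_sq_eq, ← exp_sum, ← Finset.sum_neg_distrib, Finset.sum_div]

lemma integrable_exp_neg_norm_sq_div_two :
    Integrable fun x : EuclideanSpace ℝ ι => exp (-‖x‖ ^ 2 / 2) := by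
  have hmp := EuclideanSpace.volume_preserving_symm_measurableEquiv_toLp ι
  rw [funext exp_neg_norm_sq_div_two_eq_prod]
  exact (hmp.integrable_comp_emb (MeasurableEquiv.measurableEmbedding _)).2
    (Integrable.fintype_prod (f := fun _ t => exp (-t ^ 2 / 2))
      fun _ => integrable_exp_neg_sq_div_two)

lemma integral_comp_apply_mul_exp_neg_norm_sq_div_two (h : ℝ → ℝ) (i : ι) :
    ∫ x : EuclideanSpace ℝ ι, h (x i) * exp (-‖x‖ ^ 2 / 2) =
      (∫ t, h t * exp (-t ^ 2 / 2)) * √(2 * π) ^ (Fintype.card ι - 1) := by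
  classical
  set g : ι → ℝ → ℝ := fun j t => (if j = i then h t else 1) * exp (-t ^ 2 / 2)
  have hg (x : EuclideanSpace ℝ ι) : h (x i) * exp (-‖x‖ ^ 2 / 2) = ∏ j, g j (x j) := by
    rw [Finset.prod_mul_distrib, Finset.prod_ite_eq', if_pos (Finset.mem_univ i),
      exp_neg_norm_sq_div_two_eq_prod]
  have hgi : ∫ t, g i t = ∫ t, h t * exp (-t ^ 2 / 2) := by simp only [g, if_pos]
  have hgj (j : ι) (hj : j ∈ ({i}ᶜ : Finset ι)) : ∫ t, g j t = √(2 * π) := by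
    simp only [g, if_neg (Finset.mem_compl.1 hj ∘ Finset.mem_singleton.2), one_mul,
      integral_exp_neg_sq_div_two]
  simp_rw [hg]
  rw [← (EuclideanSpace.volume_preserving_symm_measurableEquiv_toLp ι).symm.integral_comp']
  change ∫ y : ι → ℝ, ∏ j, g j (y j) = _
  rw [integral_fintype_prod_volume_eq_prod, Fintype.prod_eq_mul_prod_compl i, hgi,
    Finset.prod_congr rfl hgj, Finset.prod_const, Finset.card_compl, Finset.card_singleton]

lemma setIntegral_abs_apply_ge_exp_neg_norm_sq_div_two (a : ℝ) (i : ι) :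
    ∫ x in {x : EuclideanSpace ℝ ι | a ≤ |x i|}, exp (-‖x‖ ^ 2 / 2) =
      (∫ t in {t : ℝ | a ≤ |t|}, exp (-t ^ 2 / 2)) * √(2 * π) ^ (Fintype.card ι - 1) := by
  have hS : MeasurableSet {t : ℝ | a ≤ |t|} := measurableSet_le measurable_const measurable_abs
  have hS' : MeasurableSet {x : EuclideanSpace ℝ ι | a ≤ |x i|} :=
    measurableSet_le measurable_const (by fun_prop)
  rw [← integral_indicator hS, ← integral_indicator hS']
  convert integral_comp_apply_mul_exp_neg_norm_sq_div_two ({t : ℝ | a ≤ |t|}.indicator 1) i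
    using 1
  · congr 1 with x
    simp only [indicator_apply, mem_ofPred_eq, Pi.one_apply, ite_mul, one_mul, zero_mul]
  · congr 2 with t
    simp only [indicator_apply, mem_ofPred_eq, Pi.one_apply, ite_mul, one_mul, zero_mul]

lemma exists_le_abs_apply_of_le_norm [Nonempty ι] {x : EuclideanSpace ℝ ι} {d : ℝ}
    (hd : d ≤ ‖x‖) : ∃ i, d / √(Fintype.card ι) ≤ |x i| := by
  obtain ⟨i, -, hi⟩ := Finset.exists_max_image Finset.univ (fun j => |x j|) Finset.univ_nonempty
  refine ⟨i, div_le_of_le_mul₀ (sqrt_nonneg _) (abs_nonneg _) ?_⟩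
  calc d ≤ ‖x‖ := hd
    _ = √(∑ j, |x j| ^ 2) := by simp [EuclideanSpace.norm_eq]
    _ ≤ √(Fintype.card ι * |x i| ^ 2) := by
        gcongr
        simpa using Finset.sum_le_card_nsmul Finset.univ _ _
          fun j _ => pow_le_pow_left₀ (abs_nonneg _) (hi j (Finset.mem_univ _)) 2
    _ = |x i| * √(Fintype.card ι) := by
        rw [sqrt_mul (Nat.cast_nonneg _), sqrt_sq (abs_nonneg _), mul_comm]

end EuclideanGaussian

lemma setIntegral_le_sum_setIntegral_of_subset_iUnion {α ι : Type*} [MeasurableSpace α]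
    [Fintype ι] {μ : Measure α} {f : α → ℝ} (hf0 : 0 ≤ f) (hf : Integrable f μ) {K : Set α}
    {s : ι → Set α} (hK : K ⊆ ⋃ i, s i) :
    ∫ x in K, f x ∂μ ≤ ∑ i, ∫ x in s i, f x ∂μ := by
  have hle : μ.restrict K ≤ ∑ i, μ.restrict (s i) :=
    (Measure.restrict_mono hK le_rfl).trans
      (Measure.restrict_iUnion_le.trans_eq (Measure.sum_fintype _))
  calc ∫ x in K, f x ∂μ ≤ ∫ x, f x ∂(∑ i, μ.restrict (s i)) :=
        integral_mono_measure hle (ae_of_all _ hf0)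
          (integrable_finsetSum_measure.2 fun i _ => hf.restrict)
    _ = ∑ i, ∫ x in s i, f x ∂μ := integral_finsetSum_measure fun i _ => hf.restrict

lemma gaussianMeasure_nonneg (n : ℕ) (A : Set (En n)) : 0 ≤ gaussianMeasure n A :=
  mul_nonneg (by positivity) (setIntegral_nonneg_of_ae (ae_of_all _ fun _ => (exp_pos _).le))

lemma gaussianMeasure_le_of_le_norm {n : ℕ} (hn : 1 ≤ n) {K : Set (En n)} {d : ℝ} (hd : 0 < d)
    (hK : ∀ x ∈ K, d ≤ ‖x‖) :
    gaussianMeasure n K ≤ 2 * n * √n / (√(2 * π) * d) * exp (-d ^ 2 / (2 * n)) := by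
  have : Nonempty (Fin n) := Fin.pos_iff_nonempty.1 hn
  have hn0 : (0 : ℝ) < n := by exact_mod_cast hn
  set a := d / √n with ha_def
  have ha : 0 < a := by positivity
  have hcover : K ⊆ ⋃ i, {x : En n | a ≤ |x i|} := fun x hx =>
    mem_iUnion.2 (by simpa using exists_le_abs_apply_of_le_norm (hK x hx))
  have hslab (i : Fin n) : ∫ x in {x : En n | a ≤ |x i|}, exp (-‖x‖ ^ 2 / 2) ≤
      2 * (exp (-a ^ 2 / 2) / a) * √(2 * π) ^ (n - 1) := by
    rw [setIntegral_abs_apply_ge_exp_neg_norm_sq_div_two, Fintype.card_fin,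
      setIntegral_abs_ge_eq_two_mul_setIntegral_Ioi (fun t => by simp only [neg_sq]) ha]
    gcongr
    exact integral_Ioi_exp_neg_sq_div_two_le ha
  have hpow : (2 * π) ^ (-(n : ℝ) / 2) * √(2 * π) ^ (n - 1) = (√(2 * π))⁻¹ := by
    rw [sqrt_eq_rpow, ← rpow_natCast, ← rpow_mul (by positivity), ← rpow_add (by positivity),
      ← rpow_neg (by positivity), Nat.cast_sub hn]
    ring_nf
  calc gaussianMeasure n K
      ≤ (2 * π) ^ (-(n : ℝ) / 2) *
          ∑ i : Fin n, ∫ x in {x : En n | a ≤ |x i|}, exp (-‖x‖ ^ 2 / 2) :=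
        mul_le_mul_of_nonneg_left (setIntegral_le_sum_setIntegral_of_subset_iUnion
          (fun _ => (exp_pos _).le) integrable_exp_neg_norm_sq_div_two hcover) (by positivity)
    _ ≤ (2 * π) ^ (-(n : ℝ) / 2) * √(2 * π) ^ (n - 1) * (2 * n * exp (-a ^ 2 / 2) / a) := by
        rw [mul_assoc]
        gcongr
        refine (Finset.sum_le_card_nsmul _ _ _ fun i _ => hslab i).trans_eq ?_
        simp only [Finset.card_univ, Fintype.card_fin, nsmul_eq_mul]
        ring
    _ = 2 * n * √n / (√(2 * π) * d) * exp (-d ^ 2 / (2 * n)) := by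
        rw [hpow, ha_def, div_pow, sq_sqrt hn0.le]
        field_simp

section PseudoCone

variable {n : ℕ} {C K : Set (En n)} {u : En n}

lemma IsPseudoCone.subset_recessionCone (hK : IsPseudoCone K) : K ⊆ recessionCone K := by
  obtain ⟨-, -, hconv, -, hsmul⟩ := hK
  intro y hy x hx
  have hmid : (1 / 2 : ℝ) • x + (1 / 2 : ℝ) • y ∈ K :=
    hconv hx hy (by norm_num) (by norm_num) (by norm_num)
  convert hsmul 2 one_le_two (smul_mem_smul_set hmid) using 1
  rw [smul_add, smul_smul, smul_smul]
  norm_num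

lemma IsCPseudoCone.subset (hK : IsCPseudoCone C K) : K ⊆ C :=
  hK.2 ▸ hK.1.subset_recessionCone

lemma inner_le_neg_mul_norm_of_closedBall_subset_polarCone {ε : ℝ} (hε : 0 ≤ ε)
    (hu : closedBall u ε ⊆ polarCone C) {x : En n} (hx : x ∈ C) : ⟪u, x⟫ ≤ -(ε * ‖x‖) := by
  rcases eq_or_ne x 0 with rfl | hx0
  · simp
  have hw : u + (ε / ‖x‖) • x ∈ closedBall u ε := by
    rw [mem_closedBall, dist_eq_norm, add_sub_cancel_left, norm_smul, norm_div, norm_norm,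
      Real.norm_of_nonneg hε, div_mul_cancel₀ _ (norm_ne_zero_iff.2 hx0)]
  have := hu hw x hx
  rw [inner_add_left, real_inner_smul_left, real_inner_self_eq_norm_sq,
    div_mul_eq_mul_div, pow_two, ← mul_assoc, mul_div_cancel_right₀ _ (norm_ne_zero_iff.2 hx0)]
    at this
  linarith

lemma bddAbove_inner_image_of_mem_polarCone (hKC : K ⊆ C) (hu : u ∈ polarCone C) :
    BddAbove ((fun x => ⟪x, u⟫) '' K) :=
  ⟨0, forall_mem_image.2 fun x hx => real_inner_comm x u ▸ hu x (hKC hx)⟩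

lemma suppFn_neg_of_mem_interior_polarCone (hKC : K ⊆ C) (hKne : K.Nonempty)
    (hu : u ∈ interior (polarCone C)) {d : ℝ} (hd : 0 < d) (hK : ∀ x ∈ K, d ≤ ‖x‖) :
    suppFn K u < 0 := by
  obtain ⟨ε, hε, hball⟩ := Metric.isOpen_iff.1 isOpen_interior u hu
  have hball' : closedBall u (ε / 2) ⊆ polarCone C :=
    ((closedBall_subset_ball (half_lt_self hε)).trans hball).trans interior_subset
  have hsupp : suppFn K u ≤ -(ε / 2 * d) := by
    refine csSup_le (hKne.image _) (forall_mem_image.2 fun x hx => ?_)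
    rw [real_inner_comm]
    have := inner_le_neg_mul_norm_of_closedBall_subset_polarCone (half_pos hε).le hball'
      (hKC hx)
    nlinarith [hK x hx]
  nlinarith

lemma neg_infDist_le_suppFn (hKne : K.Nonempty) (hbdd : BddAbove ((fun x => ⟪x, u⟫) '' K))
    (hu : ‖u‖ ≤ 1) : -infDist 0 K ≤ suppFn K u := by
  rw [neg_le, le_infDist hKne]
  intro x hx
  rw [dist_zero_left]
  have h1 := neg_le_of_abs_le (abs_real_inner_le_norm x u)
  have h2 : ⟪x, u⟫ ≤ suppFn K u := le_csSup hbdd (mem_image_of_mem _ hx)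
  nlinarith [norm_nonneg x]

lemma IsCPseudoCone.neg_suppFn_mem_Ioc (hK : IsCPseudoCone C K) (hu : u ∈ OmegaSet C)
    (hd : 0 < infDist 0 K) : -suppFn K u ∈ Ioc 0 (infDist 0 K) := by
  have hKne := hK.1.1
  refine ⟨neg_pos.2 (suppFn_neg_of_mem_interior_polarCone hK.subset hKne hu.2 hd
    fun x hx => by simpa using infDist_le_dist_of_mem (x := 0) hx), neg_le.1 ?_⟩
  exact neg_infDist_le_suppFn hKne
    (bddAbove_inner_image_of_mem_polarCone hK.subset (interior_subset hu.2))
    (mem_sphere_zero_iff_norm.1 hu.1).le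

end PseudoCone

lemma div_setIntegral_le_div_of_le {α : Type*} [MeasurableSpace α] {μ : Measure α} {s : Set α}
    (hs : MeasurableSet s) (hμs : μ s ≠ 0) (hμs' : μ s ≠ ∞) {f : α → ℝ} {c G B : ℝ}
    (hc : 0 < c) (hf : ∀ x ∈ s, c ≤ f x) (hG : 0 ≤ G) (hGB : G ≤ B) :
    G / ∫ x in s, f x ∂μ ≤ B / (c * μ.real s) := by
  have hcμ : 0 < c * μ.real s := mul_pos hc (ENNReal.toReal_pos hμs hμs')
  by_cases hint : IntegrableOn f s μ
  · calc G / ∫ x in s, f x ∂μ ≤ G / (c * μ.real s) :=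
          div_le_div_of_nonneg_left hG hcμ (setIntegral_ge_of_const_le_real hs hμs' hf hint)
      _ ≤ B / (c * μ.real s) := div_le_div_of_nonneg_right hGB hcμ.le
  · -- the Bochner integral of a non-integrable function is `0`, and `G / 0 = 0`
    rw [integral_undef hint, div_zero]
    exact div_nonneg (hG.trans hGB) hcμ.le

theorem phi_mu_upper_estimate_general {n : ℕ} (hn : 1 ≤ n) (C : Set (En n))
    (ω : Set (En n)) (hωc : IsCompact ω) (hωΩ : ω ⊆ OmegaSet C)
    (μ : Measure (En n)) [IsFiniteMeasure μ] (hμ : μ ω ≠ 0)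
    (p : ℝ) (hp : p < 0)
    (K : Set (En n)) (hK : IsCPseudoCone C K)
    (d : ℝ) (hd : d = Metric.infDist 0 K) (hd0 : 0 < d) :
    gaussianMeasure n K / ∫ u in ω, (-suppFn K u) ^ p ∂μ ≤
      2 * n * Real.sqrt n / (Real.sqrt (2 * Real.pi) * d) * Real.exp (-d ^ 2 / (2 * n)) *
        d ^ (-p) / (μ ω).toReal := by
  subst hd
  have hbound (u : En n) (hu : u ∈ ω) : infDist 0 K ^ p ≤ (-suppFn K u) ^ p := by
    obtain ⟨hpos, hle⟩ := hK.neg_suppFn_mem_Ioc (hωΩ hu) hd0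
    exact rpow_le_rpow_of_nonpos hpos hle hp.le
  have hgauss := gaussianMeasure_le_of_le_norm hn hd0 fun x hx => by
    simpa using infDist_le_dist_of_mem (x := 0) hx
  calc _ ≤ _ / (infDist 0 K ^ p * μ.real ω) :=
        div_setIntegral_le_div_of_le hωc.measurableSet hμ (measure_ne_top μ ω)
          (rpow_pos_of_pos hd0 p) hbound (gaussianMeasure_nonneg n K) hgauss
    _ = _ := by
        rw [rpow_neg hd0.le, measureReal_def]
        field_simp

/-- For `p < 0`, a nonzero finite Borel measure `μ` on a nonempty compact `ω ⊆ Ω`, and a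
`C`-pseudo-cone `K` with `d = dist(0,K) > 0`:
`γⁿ(K) / ∫_ω (-h_K)^p dμ ≤ (2n√n/(√(2π) d)) e^{-d²/(2n)} d^{-p} / μ(ω)`. -/
theorem phi_mu_upper_estimate {n : ℕ} (hn : 1 ≤ n) (C : Set (En n)) (hC : IsPointedCone C)
    (ω : Set (En n)) (hω : ω.Nonempty) (hωc : IsCompact ω) (hωΩ : ω ⊆ OmegaSet C)
    (μ : Measure (En n)) [IsFiniteMeasure μ] (hμsupp : μ ωᶜ = 0) (hμ : μ ω ≠ 0)
    (p : ℝ) (hp : p < 0)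
    (K : Set (En n)) (hK : IsCPseudoCone C K)
    (d : ℝ) (hd : d = Metric.infDist 0 K) (hd0 : 0 < d) :
    gaussianMeasure n K / ∫ u in ω, (-suppFn K u) ^ p ∂μ ≤
      2 * n * Real.sqrt n / (Real.sqrt (2 * Real.pi) * d) * Real.exp (-d ^ 2 / (2 * n)) *
        d ^ (-p) / (μ ω).toReal :=
  phi_mu_upper_estimate_general hn C ω hωc hωΩ μ hμ p hp K hK d hd hd0
end

section
/- Let C ⊆ ℝⁿ be a pointed n-dimensional closed convex cone, p > 0, and μ a nonzero finite Borel measure on Ω = S^{n-1} ∩ int C°. Let (ω_i)_{i∈ℕ} be nonempty compact subsets of Ω with ω_i contained in the interior of ω_{i+1} relative to S^{n-1}, ⋃_i ω_i = Ω, and μ restricted to ω_0 nonzero. For each i, let K_i ∈ 𝒦(C,ω_i) be such that γⁿ(K_i) ∫_{ω_i} (−h_{K_i})^p dμ ≥ γⁿ([f]) ∫_{ω_i} f^p dμ for every continuous f : ω_i → (0,∞) (i.e. K_i maximizes I_{μ⌞ω_i}). Then there exist constants 0 < m < M such that m < dist(0, K_i) < M for all i ∈ ℕ. -/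
open MeasureTheory Metric Set Filter
open scoped RealInnerProductSpace Pointwise Topology ENNReal

/-! Testing the maximality of `K i` against `f ≡ 1`: the Wulff shape `[1]` contains a unit ball
inside `C` that does not depend on `i`, so `I(K i) = γⁿ(K i) ∫ (-h_{K i})ᵖ dμ` is bounded below
uniformly in `i`. On the other hand `0 ≤ -h_{K i} ≤ d := dist(0, K i)` on `Ω` and
`γⁿ(K i) ≤ 2^{n/2} e^{-d²/4}`, so `I(K i) ≲ e^{-d²/4} dᵖ`, which tends to `0` both as `d → 0`
(because `p > 0`) and as `d → ∞`. -/

lemma integrable_rexp_neg_mul_sq_norm {V : Type*} [NormedAddCommGroup V] [InnerProductSpace ℝ V]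
    [FiniteDimensional ℝ V] [MeasurableSpace V] [BorelSpace V] {b : ℝ} (hb : 0 < b) :
    Integrable (fun v : V => Real.exp (-b * ‖v‖ ^ 2)) :=
  .of_integral_ne_zero (by rw [GaussianFourier.integral_rexp_neg_mul_sq_norm hb]; positivity)

namespace gaussianMeasure

variable {n : ℕ}

lemma integrable_density : Integrable (fun x : En n => Real.exp (-‖x‖ ^ 2 / 2)) := by
  refine (integrable_rexp_neg_mul_sq_norm (b := 2⁻¹) (by norm_num)).congr (ae_of_all _ fun x => ?_)
  ring_nf

lemma normalizer_pos : 0 < (2 * Real.pi) ^ (-(n : ℝ) / 2) := by positivity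

lemma nonneg (A : Set (En n)) : 0 ≤ gaussianMeasure n A :=
  mul_nonneg normalizer_pos.le (setIntegral_nonneg_of_ae (ae_of_all _ fun _ => (Real.exp_pos _).le))

lemma mono {A B : Set (En n)} (h : A ⊆ B) : gaussianMeasure n A ≤ gaussianMeasure n B :=
  mul_le_mul_of_nonneg_left (setIntegral_mono_set integrable_density.integrableOn
    (ae_of_all _ fun _ => (Real.exp_pos _).le) h.eventuallyLE) normalizer_pos.le

lemma pos {A : Set (En n)} (hA : volume A ≠ 0) : 0 < gaussianMeasure n A := by
  refine mul_pos normalizer_pos ?_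
  rw [setIntegral_pos_iff_support_of_nonneg_ae (ae_of_all _ fun _ => (Real.exp_pos _).le)
    integrable_density.integrableOn]
  simpa [Function.support, (Real.exp_pos _).ne'] using pos_iff_ne_zero.mpr hA

lemma setIntegral_density_le_exp_infDist {A : Set (En n)} (hA : MeasurableSet A) :
    ∫ x in A, Real.exp (-‖x‖ ^ 2 / 2) ≤
      Real.exp (-infDist 0 A ^ 2 / 4) * (4 * Real.pi) ^ ((n : ℝ) / 2) := by
  set d := infDist (0 : En n) A
  have h4 := integrable_rexp_neg_mul_sq_norm (V := En n) (b := 4⁻¹) (by norm_num)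
  have hpt : ∀ x ∈ A,
      Real.exp (-‖x‖ ^ 2 / 2) ≤ Real.exp (-d ^ 2 / 4) * Real.exp (-4⁻¹ * ‖x‖ ^ 2) := by
    intro x hx
    have hdx : d ≤ ‖x‖ := by simpa using infDist_le_dist_of_mem (x := (0 : En n)) hx
    rw [← Real.exp_add, Real.exp_le_exp]
    nlinarith [infDist_nonneg (x := (0 : En n)) (s := A)]
  calc ∫ x in A, Real.exp (-‖x‖ ^ 2 / 2)
      ≤ ∫ x in A, Real.exp (-d ^ 2 / 4) * Real.exp (-4⁻¹ * ‖x‖ ^ 2) :=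
        setIntegral_mono_on integrable_density.integrableOn (h4.const_mul _).integrableOn hA hpt
    _ ≤ Real.exp (-d ^ 2 / 4) * ∫ x, Real.exp (-4⁻¹ * ‖x‖ ^ 2) := by
        rw [integral_const_mul]
        exact mul_le_mul_of_nonneg_left
          (setIntegral_le_integral h4 (ae_of_all _ fun _ => (Real.exp_pos _).le))
          (Real.exp_pos _).le
    _ = Real.exp (-d ^ 2 / 4) * (4 * Real.pi) ^ ((n : ℝ) / 2) := by
        rw [GaussianFourier.integral_rexp_neg_mul_sq_norm (by norm_num),
          finrank_euclideanSpace_fin]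
        congr 2
        ring

lemma le_two_rpow_mul_exp_infDist {A : Set (En n)} (hA : MeasurableSet A) :
    gaussianMeasure n A ≤ 2 ^ ((n : ℝ) / 2) * Real.exp (-infDist 0 A ^ 2 / 4) := by
  have hconst :
      (2 * Real.pi) ^ (-(n : ℝ) / 2) * (4 * Real.pi) ^ ((n : ℝ) / 2) = 2 ^ ((n : ℝ) / 2) := by
    rw [neg_div, Real.rpow_neg (by positivity), ← Real.inv_rpow (by positivity),
      ← Real.mul_rpow (by positivity) (by positivity)]
    congr 1
    field_simp
    ring
  calc gaussianMeasure n A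
      ≤ (2 * Real.pi) ^ (-(n : ℝ) / 2) *
          (Real.exp (-infDist 0 A ^ 2 / 4) * (4 * Real.pi) ^ ((n : ℝ) / 2)) :=
        mul_le_mul_of_nonneg_left (setIntegral_density_le_exp_infDist hA) normalizer_pos.le
    _ = _ := by rw [← hconst]; ring

end gaussianMeasure

section Geometry

variable {n : ℕ} {C : Set (En n)}

lemma IsPointedCone.exists_ball_subset (hC : IsPointedCone C) {R : ℝ} (hR : 0 < R) :
    ∃ c, ball c R ⊆ C := by
  obtain ⟨z, hz⟩ := hC.2.2.2.1
  obtain ⟨ε, hε, hball⟩ := Metric.isOpen_iff.mp isOpen_interior z hz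
  refine ⟨(R / ε) • z, ?_⟩
  have hscale : (R / ε) • ball z ε = ball ((R / ε) • z) R := by
    rw [_root_.smul_ball (by positivity), Real.norm_of_nonneg (by positivity),
      div_mul_cancel₀ _ hε.ne']
  rw [← hscale]
  rintro _ ⟨x, hx, rfl⟩
  exact hC.2.2.1 x (interior_subset (hball hx)) _ (by positivity)

lemma inner_nonpos_of_mem_polarCone {x u : En n} (hx : x ∈ C) (hu : u ∈ polarCone C) :
    ⟪x, u⟫ ≤ 0 :=
  (real_inner_comm u x).trans_le (hu x hx)

lemma inner_le_neg_one_of_ball_subset {x u : En n} (hx : ball x 2 ⊆ C) (hu : u ∈ polarCone C)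
    (hu1 : ‖u‖ = 1) : ⟪x, u⟫ ≤ -1 := by
  have := inner_nonpos_of_mem_polarCone (hx (by simp [hu1] : x + u ∈ ball x 2)) hu
  rw [inner_add_left, real_inner_self_eq_norm_sq, hu1] at this
  linarith

lemma closedBall_subset_wulffShape_one {c : En n} (hc : ball c 3 ⊆ C) {ω : Set (En n)}
    (hω : ω ⊆ OmegaSet C) : closedBall c 1 ⊆ wulffShape C ω (fun _ => 1) := by
  intro x hx
  have hx2 : ball x 2 ⊆ C :=
    (ball_subset_ball' (by linarith [mem_closedBall.mp hx])).trans hc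
  refine ⟨hx2 (mem_ball_self two_pos), mem_iInter₂.mpr fun u hu => ?_⟩
  exact inner_le_neg_one_of_ball_subset hx2 (interior_subset (hω hu).2)
    (mem_sphere_zero_iff_norm.mp (hω hu).1)

lemma suppFn_nonpos {K : Set (En n)} (hK : K ⊆ C) {u : En n} (hu : u ∈ polarCone C) :
    suppFn K u ≤ 0 :=
  Real.sSup_nonpos <| by
    rintro _ ⟨x, hx, rfl⟩
    exact inner_nonpos_of_mem_polarCone (hK hx) hu

lemma neg_infDist_le_suppFn_s11 {K : Set (En n)} (hne : K.Nonempty) (hK : K ⊆ C) {u : En n}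
    (hu : u ∈ polarCone C) (hu1 : ‖u‖ ≤ 1) : -infDist 0 K ≤ suppFn K u := by
  have hbdd : BddAbove ((fun x => ⟪x, u⟫) '' K) :=
    ⟨0, by rintro _ ⟨x, hx, rfl⟩; exact inner_nonpos_of_mem_polarCone (hK hx) hu⟩
  suffices -suppFn K u ≤ infDist 0 K by linarith
  refine (le_infDist hne).mpr fun x hx => ?_
  have h1 : ⟪x, u⟫ ≤ suppFn K u := le_csSup hbdd ⟨x, hx, rfl⟩
  have h2 : -‖x‖ ≤ ⟪x, u⟫ := by
    nlinarith [neg_abs_le ⟪x, u⟫, abs_real_inner_le_norm x u, norm_nonneg x]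
  rw [dist_zero_left]
  linarith

end Geometry

lemma setIntegral_rpow_neg_suppFn_le {n : ℕ} {C K ω : Set (En n)} (hne : K.Nonempty)
    (hKC : K ⊆ C) (hω : ω ⊆ OmegaSet C) (μ : Measure (En n)) [IsFiniteMeasure μ] {p : ℝ}
    (hp : 0 ≤ p) : ∫ u in ω, (-suppFn K u) ^ p ∂μ ≤ infDist 0 K ^ p * μ.real ω := by
  refine (Real.le_norm_self _).trans (norm_setIntegral_le_of_norm_le_const (measure_lt_top _ _)
    fun u hu => ?_)
  have hpol : u ∈ polarCone C := interior_subset (hω hu).2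
  have hnonneg : 0 ≤ -suppFn K u := neg_nonneg.mpr (suppFn_nonpos hKC hpol)
  have hle : -suppFn K u ≤ infDist 0 K :=
    neg_le.mp (neg_infDist_le_suppFn_s11 hne hKC hpol (mem_sphere_zero_iff_norm.mp (hω hu).1).le)
  rw [Real.norm_of_nonneg (Real.rpow_nonneg hnonneg p)]
  exact Real.rpow_le_rpow hnonneg hle hp

lemma exists_bounds_of_le_mul_exp_mul_rpow {a c p : ℝ} (ha : 0 < a) (hp : 0 < p) :
    ∃ m M, 0 < m ∧ m < M ∧
      ∀ t, 0 ≤ t → a ≤ c * (Real.exp (-t ^ 2 / 4) * t ^ p) → m < t ∧ t < M := by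
  set g : ℝ → ℝ := fun t => c * (Real.exp (-t ^ 2 / 4) * t ^ p)
  have hg0 : Tendsto g (𝓝 0) (𝓝 0) := by
    have : Continuous g := by
      fun_prop (disch := exact hp.le)
    simpa [g, Real.zero_rpow hp.ne'] using this.tendsto 0
  have hgtop : Tendsto g atTop (𝓝 0) := by
    have h := ((tendsto_rpow_mul_exp_neg_mul_atTop_nhds_zero (p / 2) 4⁻¹ (by norm_num)).comp
      (tendsto_pow_atTop two_ne_zero)).const_mul c
    rw [mul_zero] at h
    refine h.congr' ((eventually_ge_atTop 0).mono fun t ht => ?_)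
    simp only [g, Function.comp_apply]
    rw [← Real.rpow_natCast, ← Real.rpow_mul ht]
    ring_nf
  obtain ⟨ε, hε, hsmall⟩ := Metric.eventually_nhds_iff.mp (hg0.eventually_lt_const ha)
  obtain ⟨R, hlarge⟩ := eventually_atTop.mp (hgtop.eventually_lt_const ha)
  refine ⟨ε / 2, max R ε, by positivity, by simp [hε], fun t ht hat => ⟨?_, ?_⟩⟩
  · by_contra! h
    exact (hsmall (by rw [Real.dist_0_eq_abs, abs_of_nonneg ht]; linarith)).not_ge hat
  · by_contra! h
    exact (hlarge t (le_of_max_le_left h)).not_ge hat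

theorem uniform_estimate_p_pos_general {n : ℕ} (C : Set (En n)) (hC : IsPointedCone C)
    (p : ℝ) (hp : 0 < p)
    (μ : Measure (En n)) [IsFiniteMeasure μ]
    (ω : ℕ → Set (En n))
    (hsub : ∀ i, ω i ⊆ OmegaSet C)
    (hint : ∀ i, ∀ x ∈ ω i, ∃ V : Set (En n),
      IsOpen V ∧ x ∈ V ∧ V ∩ sphere (0 : En n) 1 ⊆ ω (i + 1))
    (hμω0 : μ (ω 0) ≠ 0)
    (K : ℕ → Set (En n)) (hK : ∀ i, InKClass C (ω i) (K i))
    (hmax : ∀ i, ∀ f : En n → ℝ, ContinuousOn f (ω i) → (∀ u ∈ ω i, 0 < f u) →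
      gaussianMeasure n (wulffShape C (ω i) f) * ∫ u in ω i, f u ^ p ∂μ ≤
        gaussianMeasure n (K i) * ∫ u in ω i, (-suppFn (K i) u) ^ p ∂μ) :
    ∃ m M : ℝ, 0 < m ∧ m < M ∧
      ∀ i, m < Metric.infDist 0 (K i) ∧ Metric.infDist 0 (K i) < M := by
  have hmono : Monotone ω := monotone_nat_of_le_succ fun i x hx => by
    obtain ⟨V, -, hxV, hV⟩ := hint i x hx
    exact hV ⟨hxV, (hsub i hx).1⟩
  obtain ⟨c, hc⟩ := hC.exists_ball_subset (R := 3) (by norm_num)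
  set a := gaussianMeasure n (closedBall c 1) * μ.real (ω 0)
  have ha : 0 < a := mul_pos (gaussianMeasure.pos (measure_closedBall_pos _ _ one_pos).ne')
    (ENNReal.toReal_pos hμω0 (measure_ne_top μ _))
  obtain ⟨m, M, hm, hmM, hbounds⟩ :=
    exists_bounds_of_le_mul_exp_mul_rpow (c := 2 ^ ((n : ℝ) / 2) * μ.real univ) ha hp
  refine ⟨m, M, hm, hmM, fun i => hbounds _ infDist_nonneg ?_⟩
  obtain ⟨⟨⟨hKne, hKcl, -⟩, -⟩, hKeq⟩ := hK i
  have hKC : K i ⊆ C := hKeq ▸ inter_subset_left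
  calc a ≤ gaussianMeasure n (wulffShape C (ω i) fun _ => 1) * ∫ _ in ω i, (1 : ℝ) ^ p ∂μ := by
        simp only [Real.one_rpow, setIntegral_const, smul_eq_mul, mul_one]
        exact mul_le_mul (gaussianMeasure.mono (closedBall_subset_wulffShape_one hc (hsub i)))
          (measureReal_mono (hmono (Nat.zero_le i))) measureReal_nonneg (gaussianMeasure.nonneg _)
    _ ≤ gaussianMeasure n (K i) * ∫ u in ω i, (-suppFn (K i) u) ^ p ∂μ :=
        hmax i _ continuousOn_const fun _ _ => one_pos
    _ ≤ (2 ^ ((n : ℝ) / 2) * Real.exp (-infDist 0 (K i) ^ 2 / 4)) *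
          (infDist 0 (K i) ^ p * μ.real univ) :=
        mul_le_mul_of_nonneg (gaussianMeasure.le_two_rpow_mul_exp_infDist hKcl.measurableSet)
          ((setIntegral_rpow_neg_suppFn_le hKne hKC (hsub i) μ hp.le).trans
            (mul_le_mul_of_nonneg_left (measureReal_mono (subset_univ _))
              (Real.rpow_nonneg infDist_nonneg _)))
          (gaussianMeasure.nonneg _)
          (mul_nonneg (Real.rpow_nonneg infDist_nonneg _) measureReal_nonneg)
    _ = _ := by ring

/-- Uniform bounds on `dist(0, K_i)` for maximizers `K_i` of `I_{μ⌞ω_i}` (case `p > 0`),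
where `(ω_i)` is an increasing exhaustion of `Ω` by nonempty compact sets, each contained in
the interior of the next relative to the sphere. -/
theorem uniform_estimate_p_pos {n : ℕ} (hn : 1 ≤ n) (C : Set (En n)) (hC : IsPointedCone C)
    (p : ℝ) (hp : 0 < p)
    (μ : Measure (En n)) [IsFiniteMeasure μ] (hμsupp : μ (OmegaSet C)ᶜ = 0) (hμ : μ ≠ 0)
    (ω : ℕ → Set (En n)) (hne : ∀ i, (ω i).Nonempty) (hcpt : ∀ i, IsCompact (ω i))
    (hsub : ∀ i, ω i ⊆ OmegaSet C)
    (hint : ∀ i, ∀ x ∈ ω i, ∃ V : Set (En n),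
      IsOpen V ∧ x ∈ V ∧ V ∩ sphere (0 : En n) 1 ⊆ ω (i + 1))
    (hunion : ⋃ i, ω i = OmegaSet C)
    (hμω0 : μ (ω 0) ≠ 0)
    (K : ℕ → Set (En n)) (hK : ∀ i, InKClass C (ω i) (K i))
    (hmax : ∀ i, ∀ f : En n → ℝ, ContinuousOn f (ω i) → (∀ u ∈ ω i, 0 < f u) →
      gaussianMeasure n (wulffShape C (ω i) f) * ∫ u in ω i, f u ^ p ∂μ ≤
        gaussianMeasure n (K i) * ∫ u in ω i, (-suppFn (K i) u) ^ p ∂μ) :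
    ∃ m M : ℝ, 0 < m ∧ m < M ∧
      ∀ i, m < Metric.infDist 0 (K i) ∧ Metric.infDist 0 (K i) < M :=
  uniform_estimate_p_pos_general C hC p hp μ ω hsub hint hμω0 K hK hmax
end
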